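/- Let α ≥ 0, β > α + 2, and r > 0. Then ∫_{{(λ,m) ∈ 𝕂̂ : |(λ,m)| ≥ r}} |(λ,m)|^{−β} dγ_α(λ,m) = (2/(β − α − 2)) · r^{−(β−α−2)} · Σ_{m≥0} L_m^α(0) / (4m+2α+2)^{α+2}, and this quantity is finite. -/

import Mathlib

open MeasureTheory Real

noncomputable section

/-- The measure `m_α` on the Laguerre hypergroup `𝕂 = [0,∞) × ℝ`, realized as a measure on
`ℝ × ℝ` supported on `{x ≥ 0}`, with density `(π Γ(α+1))⁻¹ x^{2α+1}`. -/
def mAlpha (α : ℝ) : Measure (ℝ × ℝ) :=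
  volume.withDensity (fun q =>
    if 0 ≤ q.1 then ENNReal.ofReal ((Real.pi * Real.Gamma (α + 1))⁻¹ * q.1 ^ (2 * α + 1)) else 0)

/-- `L_m^α(0) = Γ(m+α+1)/(m! Γ(α+1))`. -/
def lag0 (α : ℝ) (m : ℕ) : ℝ :=
  Real.Gamma (m + α + 1) / (m.factorial * Real.Gamma (α + 1))

/-- The Plancherel measure `γ_α` on `𝕂̂ = ℝ × ℕ`:
`∫ g dγ_α = Σ_m L_m^α(0) ∫_ℝ g(λ,m) |λ|^{α+1} dλ`. -/
def gammaAlpha (α : ℝ) : Measure (ℝ × ℕ) :=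
  Measure.sum (fun m : ℕ =>
    Measure.map (fun l : ℝ => (l, m))
      (volume.withDensity (fun l : ℝ => ENNReal.ofReal (lag0 α m * |l| ^ (α + 1)))))

/-- The generalized Laguerre polynomial `L_m^α`. -/
def laguerreL (α : ℝ) (m : ℕ) (y : ℝ) : ℝ :=
  ∑ k ∈ Finset.range (m + 1),
    (-1 : ℝ) ^ k * Real.Gamma (m + α + 1) * y ^ k /
      (Real.Gamma (k + α + 1) * (m - k).factorial * k.factorial)

/-- The Laguerre functions `φ_{(λ,m)}`. -/
def phiLag (α : ℝ) (l : ℝ) (m : ℕ) (q : ℝ × ℝ) : ℂ :=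
  ((m.factorial * Real.Gamma (α + 1) / Real.Gamma (m + α + 1) : ℝ) : ℂ) *
    Complex.exp (Complex.I * l * q.2) *
    ((Real.exp (-(|l| * q.1 ^ 2) / 2) * laguerreL α m (|l| * q.1 ^ 2) : ℝ) : ℂ)

/-- The Fourier–Laguerre transform of `f ∈ L¹(𝕂, m_α)`. -/
def fourierLaguerre (α : ℝ) (f : ℝ × ℝ → ℂ) (p : ℝ × ℕ) : ℂ :=
  ∫ q, f q * phiLag α (-p.1) p.2 q ∂(mAlpha α)

/-- The homogeneous norm on `𝕂`: `|(x,t)| = (x⁴ + 4t²)^{1/4}`. -/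
def normK (q : ℝ × ℝ) : ℝ := (q.1 ^ 4 + 4 * q.2 ^ 2) ^ ((1 : ℝ) / 4)

/-- The quasi-norm on `𝕂̂`: `|(λ,m)| = 4|λ|(m + (α+1)/2)`. -/
def normKhat (α : ℝ) (q : ℝ × ℕ) : ℝ := 4 * |q.1| * ((q.2 : ℝ) + (α + 1) / 2)

end

/-- Recurrence for `lag0`. -/
lemma lag0_succ (α : ℝ) (hα : 0 ≤ α) (m : ℕ) :
    lag0 α (m + 1) = lag0 α m * (((m : ℝ) + α + 1) / ((m : ℝ) + 1)) := by
  have h1 : ((m : ℝ) + α + 1) ≠ 0 := by positivity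
  have h2 : Real.Gamma ((m : ℝ) + 1 + α + 1) = ((m : ℝ) + α + 1) * Real.Gamma ((m : ℝ) + α + 1) := by
    have : (m : ℝ) + 1 + α + 1 = ((m : ℝ) + α + 1) + 1 := by ring
    rw [this, Real.Gamma_add_one h1]
  have h3 : ((m + 1 : ℕ).factorial : ℝ) = ((m : ℝ) + 1) * (m.factorial : ℝ) := by
    rw [Nat.factorial_succ]; push_cast; ring
  have hm : (0 : ℝ) < m.factorial := by positivity
  have hG : (0 : ℝ) < Real.Gamma (α + 1) := Real.Gamma_pos_of_pos (by linarith)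
  unfold lag0
  push_cast
  rw [h2, h3]
  field_simp

lemma lag0_pos (α : ℝ) (hα : 0 ≤ α) (m : ℕ) : 0 < lag0 α m := by
  have h1 : (0 : ℝ) < Real.Gamma ((m : ℝ) + α + 1) := Real.Gamma_pos_of_pos (by positivity)
  have h2 : (0 : ℝ) < m.factorial := by positivity
  have h3 : (0 : ℝ) < Real.Gamma (α + 1) := Real.Gamma_pos_of_pos (by linarith)
  exact div_pos h1 (by positivity)

/-- Polynomial bound on `lag0`. -/
lemma lag0_le (α : ℝ) (hα : 0 ≤ α) (m : ℕ) :
    lag0 α m ≤ ((m : ℝ) + 1) ^ (⌈α⌉₊ : ℕ) := by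
  induction m with
  | zero =>
    have hG : Real.Gamma (α + 1) ≠ 0 := (Real.Gamma_pos_of_pos (by linarith)).ne'
    simp [lag0, Real.Gamma_pos_of_pos, hG]
  | succ m ih =>
    have hm1 : (0 : ℝ) < (m : ℝ) + 1 := by positivity
    rw [lag0_succ α hα m]
    have key : ((m : ℝ) + α + 1) / ((m : ℝ) + 1) ≤ (((m : ℝ) + 2) / ((m : ℝ) + 1)) ^ (⌈α⌉₊ : ℕ) := by
      have hb : ((m : ℝ) + 2) / ((m : ℝ) + 1) = 1 + 1 / ((m : ℝ) + 1) := by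
        field_simp
        ring
      rw [hb]
      have hnn : (0:ℝ) ≤ 1 / ((m : ℝ) + 1) := by positivity
      have hbern : 1 + (⌈α⌉₊ : ℕ) * (1 / ((m : ℝ) + 1)) ≤ (1 + 1 / ((m : ℝ) + 1)) ^ (⌈α⌉₊ : ℕ) :=
        one_add_mul_le_pow (by linarith) _
      refine le_trans ?_ hbern
      rw [div_le_iff₀ hm1]
      have hceil : α ≤ (⌈α⌉₊ : ℝ) := Nat.le_ceil α
      have heq : (1 + (⌈α⌉₊ : ℕ) * (1 / ((m : ℝ) + 1))) * ((m : ℝ) + 1)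
          = ((m : ℝ) + 1) + (⌈α⌉₊ : ℝ) := by field_simp
      rw [heq]
      linarith
    have hcast : (((m + 1 : ℕ) : ℝ) + 1) = ((m : ℝ) + 2) := by push_cast; ring
    rw [hcast]
    calc lag0 α m * (((m : ℝ) + α + 1) / ((m : ℝ) + 1))
        ≤ ((m : ℝ) + 1) ^ (⌈α⌉₊ : ℕ) * ((((m : ℝ) + 2) / ((m : ℝ) + 1)) ^ (⌈α⌉₊ : ℕ)) := by
          apply mul_le_mul ih key (by positivity) (by positivity)
      _ = (((m : ℝ) + 1) * (((m : ℝ) + 2) / ((m : ℝ) + 1))) ^ (⌈α⌉₊ : ℕ) := by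
          rw [mul_pow]
      _ = ((m : ℝ) + 2) ^ (⌈α⌉₊ : ℕ) := by
          congr 1
          field_simp

/-- Summability of the series. -/
lemma lag0_summable (α : ℝ) (hα : 0 ≤ α) :
    Summable (fun m : ℕ => lag0 α m / (4 * (m : ℝ) + 2 * α + 2) ^ (α + 2)) := by
  set n : ℕ := ⌈α⌉₊ with hn
  have hq : 1 < α + 2 - (n : ℝ) := by
    have := Nat.ceil_lt_add_one hα
    simp only [← hn] at this
    linarith
  -- summable comparison series
  have hbase : Summable (fun m : ℕ => 1 / ((m : ℝ)) ^ (α + 2 - (n : ℝ))) :=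
    (Real.summable_one_div_nat_rpow).2 hq
  have hshift : Summable (fun m : ℕ => 1 / (((m : ℝ) + 1)) ^ (α + 2 - (n : ℝ))) := by
    have := hbase.comp_injective Nat.succ_injective
    refine this.congr fun m => ?_
    simp [Function.comp, Nat.succ_eq_add_one]
  have hmul : Summable (fun m : ℕ =>
      (2 : ℝ) ^ (-(α + 2)) * (1 / (((m : ℝ) + 1)) ^ (α + 2 - (n : ℝ)))) := hshift.mul_left _
  refine Summable.of_nonneg_of_le (fun m => ?_) (fun m => ?_) hmul
  · have := lag0_pos α hα m
    positivity
  · have hm1 : (0 : ℝ) < (m : ℝ) + 1 := by positivity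
    have hc : (0 : ℝ) < 4 * (m : ℝ) + 2 * α + 2 := by positivity
    have hd : (0 : ℝ) < (2 * ((m : ℝ) + 1)) ^ (α + 2) := Real.rpow_pos_of_pos (by positivity) _
    have hdle : (2 * ((m : ℝ) + 1)) ^ (α + 2) ≤ (4 * (m : ℝ) + 2 * α + 2) ^ (α + 2) :=
      Real.rpow_le_rpow (by positivity) (by linarith) (by linarith)
    have h1 : lag0 α m / (4 * (m : ℝ) + 2 * α + 2) ^ (α + 2)
        ≤ ((m : ℝ) + 1) ^ (n : ℕ) / (2 * ((m : ℝ) + 1)) ^ (α + 2) :=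
      div_le_div₀ (by positivity) (lag0_le α hα m) hd hdle
    refine h1.trans (le_of_eq ?_)
    rw [Real.mul_rpow (by norm_num) hm1.le, ← Real.rpow_natCast ((m : ℝ) + 1) n,
      Real.rpow_sub hm1, Real.rpow_neg (by norm_num : (0:ℝ) ≤ 2)]
    have h2 : ((2:ℝ) ^ (α + 2)) ≠ 0 := (Real.rpow_pos_of_pos (by norm_num) _).ne'
    have h3 : (((m : ℝ) + 1) ^ ((n : ℕ) : ℝ)) ≠ 0 := (Real.rpow_pos_of_pos hm1 _).ne'
    have h5 : (((m : ℝ) + 1) ^ (α + 2)) ≠ 0 := (Real.rpow_pos_of_pos hm1 _).ne'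
    field_simp

/-- The key one-dimensional integral. -/
lemma aux_lintegral_abs_rpow {a p : ℝ} (ha : 0 < a) (hp : p < -1) :
    ∫⁻ l : ℝ in {l : ℝ | a ≤ |l|}, ENNReal.ofReal (|l| ^ p) =
      ENNReal.ofReal (2 * (a ^ (p + 1) / (-(p + 1)))) := by
  have hset : {l : ℝ | a ≤ |l|} = Set.Iic (-a) ∪ Set.Ici a := by
    ext l
    simp only [Set.mem_setOf_eq, Set.mem_union, Set.mem_Iic, Set.mem_Ici, le_abs, le_neg]
    tauto
  have hIci : ∫⁻ l : ℝ in Set.Ici a, ENNReal.ofReal (|l| ^ p) =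
      ENNReal.ofReal (a ^ (p + 1) / (-(p + 1))) := by
    calc ∫⁻ l : ℝ in Set.Ici a, ENNReal.ofReal (|l| ^ p)
        = ∫⁻ l : ℝ in Set.Ioi a, ENNReal.ofReal (|l| ^ p) :=
          (setLIntegral_congr (Ioi_ae_eq_Ici (a := a))).symm
      _ = ∫⁻ l : ℝ in Set.Ioi a, ENNReal.ofReal (l ^ p) := by
          refine setLIntegral_congr_fun measurableSet_Ioi ?_
          intro l hl
          dsimp only
          rw [abs_of_pos (ha.trans hl)]
      _ = ENNReal.ofReal (∫ l in Set.Ioi a, l ^ p) := by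
          refine (ofReal_integral_eq_lintegral_ofReal (integrableOn_Ioi_rpow_of_lt hp ha) ?_).symm
          refine (ae_restrict_iff' measurableSet_Ioi).2 (Filter.Eventually.of_forall ?_)
          intro l hl
          exact Real.rpow_nonneg (le_of_lt (ha.trans hl)) p
      _ = ENNReal.ofReal (a ^ (p + 1) / (-(p + 1))) := by
          rw [integral_Ioi_rpow_of_lt hp ha]
          congr 1
          rw [div_neg, neg_div]
  have hIic : ∫⁻ l : ℝ in Set.Iic (-a), ENNReal.ofReal (|l| ^ p) =
      ∫⁻ l : ℝ in Set.Ici a, ENNReal.ofReal (|l| ^ p) := by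
    have h := (Measure.measurePreserving_neg (volume : Measure ℝ)).setLIntegral_comp_emb
      (MeasurableEquiv.neg ℝ).measurableEmbedding
      (fun l : ℝ => ENNReal.ofReal (|l| ^ p)) (Set.Ici a)
    have himg : (Neg.neg : ℝ → ℝ) '' Set.Ici a = Set.Iic (-a) := by
      ext x
      simp only [Set.mem_image, Set.mem_Ici, Set.mem_Iic]
      constructor
      · rintro ⟨y, hy, rfl⟩; linarith
      · intro hx; exact ⟨-x, by linarith, by ring⟩
    simp only [abs_neg] at h
    rw [← himg]
    exact h.symm
  rw [hset, lintegral_union measurableSet_Ici (Set.Iic_disjoint_Ici.2 (by linarith)), hIic, hIci]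
  have hnn : 0 ≤ a ^ (p + 1) / (-(p + 1)) :=
    div_nonneg (Real.rpow_nonneg ha.le _) (by linarith)
  rw [← ENNReal.ofReal_add hnn hnn, ← two_mul]

/-- for `α ≥ 0`, `β > α + 2`, `r > 0`:
`∫_{|(λ,m)| ≥ r} |(λ,m)|^{−β} dγ_α = (2/(β−α−2)) r^{−(β−α−2)} Σ_m L_m^α(0)/(4m+2α+2)^{α+2}`,
and this quantity is finite. -/
theorem stmt10 (α β r : ℝ) (hα : 0 ≤ α) (hβ : β > α + 2) (hr : 0 < r) :
    (∫⁻ q in {q : ℝ × ℕ | r ≤ normKhat α q},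
        ENNReal.ofReal (normKhat α q ^ (-β)) ∂(gammaAlpha α)) =
      ENNReal.ofReal (2 / (β - α - 2) * r ^ (-(β - α - 2)) *
        ∑' m : ℕ, lag0 α m / (4 * (m : ℝ) + 2 * α + 2) ^ (α + 2)) ∧
    Summable (fun m : ℕ => lag0 α m / (4 * (m : ℝ) + 2 * α + 2) ^ (α + 2)) := by
  have hsum := lag0_summable α hα
  refine ⟨?_, hsum⟩
  -- measurability
  have hnmeas : Measurable (normKhat α) := by
    unfold normKhat
    fun_prop
  have hSmeas : MeasurableSet {q : ℝ × ℕ | r ≤ normKhat α q} :=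
    measurableSet_le measurable_const hnmeas
  have hfmeas : Measurable fun q : ℝ × ℕ => ENNReal.ofReal (normKhat α q ^ (-β)) := by
    apply ENNReal.measurable_ofReal.comp
    fun_prop
  -- per-m computation
  have key : ∀ m : ℕ,
      (∫⁻ q in {q : ℝ × ℕ | r ≤ normKhat α q},
        ENNReal.ofReal (normKhat α q ^ (-β))
        ∂(Measure.map (fun l : ℝ => (l, m))
          (volume.withDensity (fun l : ℝ => ENNReal.ofReal (lag0 α m * |l| ^ (α + 1)))))) =
      ENNReal.ofReal ((2 / (β - α - 2) * r ^ (-(β - α - 2))) *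
        (lag0 α m / (4 * (m : ℝ) + 2 * α + 2) ^ (α + 2))) := by
    intro m
    set c : ℝ := 4 * (m : ℝ) + 2 * α + 2 with hcdef
    have hc : (0 : ℝ) < c := by rw [hcdef]; positivity
    have hnorm : ∀ l : ℝ, normKhat α (l, m) = |l| * c := by
      intro l
      simp only [normKhat, hcdef]
      ring
    set a : ℝ := r / c with hadef
    have ha : 0 < a := div_pos hr hc
    set p : ℝ := α + 1 - β with hpdef
    have hp : p < -1 := by rw [hpdef]; linarith
    have hpe : -(p + 1) = β - α - 2 := by rw [hpdef]; ring
    have hpre : (fun l : ℝ => (l, m)) ⁻¹' {q : ℝ × ℕ | r ≤ normKhat α q} = {l : ℝ | a ≤ |l|} := by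
      ext l
      simp only [Set.mem_preimage, Set.mem_setOf_eq, hnorm l, hadef]
      rw [div_le_iff₀ hc]
    have hAmeas : MeasurableSet {l : ℝ | a ≤ |l|} :=
      measurableSet_le measurable_const (by fun_prop)
    have hdmeas : Measurable fun l : ℝ => ENNReal.ofReal (lag0 α m * |l| ^ (α + 1)) := by
      fun_prop
    have hgmeas : Measurable fun l : ℝ => ENNReal.ofReal (normKhat α (l, m) ^ (-β)) := by
      apply ENNReal.measurable_ofReal.comp
      have : (fun l : ℝ => normKhat α (l, m) ^ (-β)) = fun l : ℝ => (|l| * c) ^ (-β) := by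
        funext l; rw [hnorm l]
      rw [this]
      fun_prop
    rw [setLIntegral_map hSmeas hfmeas (by fun_prop), hpre,
      setLIntegral_withDensity_eq_setLIntegral_mul _ hdmeas hgmeas hAmeas]
    have hKnn : 0 ≤ lag0 α m * c ^ (-β) := by
      have := lag0_pos α hα m
      positivity
    have hcong : ∫⁻ l : ℝ in {l : ℝ | a ≤ |l|},
        ENNReal.ofReal (lag0 α m * |l| ^ (α + 1)) *
          ENNReal.ofReal (normKhat α (l, m) ^ (-β)) =
        ∫⁻ l : ℝ in {l : ℝ | a ≤ |l|},
          ENNReal.ofReal (lag0 α m * c ^ (-β)) * ENNReal.ofReal (|l| ^ p) := by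
      refine setLIntegral_congr_fun hAmeas ?_
      intro l hl
      dsimp only
      have hla : a ≤ |l| := hl
      have hlpos : 0 < |l| := lt_of_lt_of_le ha hla
      have hnn1 : 0 ≤ lag0 α m * |l| ^ (α + 1) := by
        have := lag0_pos α hα m
        positivity
      rw [hnorm l, ← ENNReal.ofReal_mul hnn1, ← ENNReal.ofReal_mul hKnn]
      congr 1
      rw [Real.mul_rpow (abs_nonneg l) hc.le]
      have hre : lag0 α m * |l| ^ (α + 1) * (|l| ^ (-β) * c ^ (-β))
          = lag0 α m * c ^ (-β) * (|l| ^ (α + 1) * |l| ^ (-β)) := by ring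
      rw [hre, ← Real.rpow_add hlpos (α + 1) (-β)]
      have hexp : α + 1 + (-β) = p := by rw [hpdef]; ring
      rw [hexp]
    simp only [Pi.mul_apply]
    rw [hcong, lintegral_const_mul _ (by fun_prop : Measurable fun l : ℝ =>
      ENNReal.ofReal (|l| ^ p)), aux_lintegral_abs_rpow ha hp,
      ← ENNReal.ofReal_mul hKnn]
    congr 1
    have h1 : a ^ (p + 1) = r ^ (p + 1) / c ^ (p + 1) := by
      rw [hadef, Real.div_rpow hr.le hc.le]
    have h2 : c ^ (-β) = c ^ (p + 1) / c ^ (α + 2) := by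
      rw [← Real.rpow_sub hc]
      congr 1
      rw [hpdef]; ring
    have h3 : r ^ (-(β - α - 2)) = r ^ (p + 1) := by
      congr 1
      rw [hpdef]; ring
    have hb0 : β - α - 2 ≠ 0 := by linarith
    have hcne1 : c ^ (p + 1) ≠ 0 := (Real.rpow_pos_of_pos hc _).ne'
    have hcne2 : c ^ (α + 2) ≠ 0 := (Real.rpow_pos_of_pos hc _).ne'
    rw [h1, h2, h3, hpe]
    field_simp
  calc ∫⁻ q in {q : ℝ × ℕ | r ≤ normKhat α q},
        ENNReal.ofReal (normKhat α q ^ (-β)) ∂(gammaAlpha α)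
      = ∑' m : ℕ, ∫⁻ q in {q : ℝ × ℕ | r ≤ normKhat α q},
          ENNReal.ofReal (normKhat α q ^ (-β))
          ∂(Measure.map (fun l : ℝ => (l, m))
            (volume.withDensity (fun l : ℝ => ENNReal.ofReal (lag0 α m * |l| ^ (α + 1))))) := by
        rw [gammaAlpha, Measure.restrict_sum _ hSmeas, lintegral_sum_measure]
    _ = ∑' m : ℕ, ENNReal.ofReal ((2 / (β - α - 2) * r ^ (-(β - α - 2))) *
          (lag0 α m / (4 * (m : ℝ) + 2 * α + 2) ^ (α + 2))) := tsum_congr key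
    _ = ENNReal.ofReal (2 / (β - α - 2) * r ^ (-(β - α - 2)) *
          ∑' m : ℕ, lag0 α m / (4 * (m : ℝ) + 2 * α + 2) ^ (α + 2)) := by
        have hC : 0 ≤ 2 / (β - α - 2) * r ^ (-(β - α - 2)) := by
          have : (0:ℝ) < β - α - 2 := by linarith
          positivity
        have htm : ∀ m : ℕ, 0 ≤ lag0 α m / (4 * (m : ℝ) + 2 * α + 2) ^ (α + 2) := by
          intro m
          have := lag0_pos α hα m
          positivity
        rw [ENNReal.ofReal_mul hC, ENNReal.ofReal_tsum_of_nonneg htm hsum,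
          ← ENNReal.tsum_mul_left]
        exact tsum_congr fun m => ENNReal.ofReal_mul hC
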